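/- arXiv:1808.10507 — 2 statements merged into one kernel-verified Lean document; each statement's English description precedes it below -/
import Mathlib

section
/- For an N×N matrix L, one has Tr(Lᵀ Ω A) = 0 for all A ∈ 𝓡 if and only if P(L) = 0, where P(L) := (L − L̂)^(A), with L̂ the matrix whose entries are L̂_{ij} = L_{ii}, and M^(A) := (M − Mᵀ)/2 the skew-symmetric part. -/
/-!
For `A ∈ 𝓡` put `B = ΩA`: its rows sum to zero and `Bᵢⱼ = -Bⱼᵢ` for `i ≠ j`. Zero row sums let
us replace `L` by `L - L̂` in `⟨L, A⟩ = ∑ Lₖₗ Bₖₗ`, and since `L - L̂` has zero diagonal, the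
off-diagonal skewness of `B` then lets us replace it by its skew part; hence
`⟨L, A⟩ = ∑ P(L)ₖₗ Bₖₗ`, which vanishes when `P(L) = 0`. Conversely, the element of `𝓡` supported
on rows `i, j` with `Bᵢⱼ = ΩᵢΩⱼ` gives `⟨L, A⟩ = 2 ΩᵢΩⱼ P(L)ᵢⱼ`.
-/

open Matrix

/-- The projector `P(L) = (L − L̂)^(A)` where `L̂ᵢⱼ = Lᵢᵢ` and
`M^(A) = (M − Mᵀ)/2` is the skew-symmetric part. -/
noncomputable def Pproj {N : ℕ} (L : Matrix (Fin N) (Fin N) ℝ) : Matrix (Fin N) (Fin N) ℝ :=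
  Matrix.of fun i j => ((L i j - L i i) - (L j i - L j j)) / 2

namespace Matrix

theorem trace_transpose_mul_eq_sum {m n R : Type*} [Fintype m] [Fintype n] [CommSemiring R]
    (L M : Matrix m n R) : trace (Lᵀ * M) = ∑ k, ∑ c, L k c * M k c := by
  rw [trace, Finset.sum_comm]
  simp only [diag, mul_apply, transpose_apply]

theorem sum_mul_eq_sum_sub_diag_mul {n R : Type*} [Fintype n] [CommRing R] (L B : Matrix n n R)
    (hB : B *ᵥ (fun _ => 1) = 0) :
    ∑ k, ∑ c, L k c * B k c = ∑ k, ∑ c, (L k c - L k k) * B k c := by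
  have hrow (k : n) : ∑ c, B k c = 0 := by
    simpa [mulVec, dotProduct] using congrFun hB k
  simp [sub_mul, Finset.sum_sub_distrib, ← Finset.mul_sum, hrow]

theorem sum_mul_eq_neg_sum_transpose_mul {n R : Type*} [Fintype n] [CommRing R]
    (M B : Matrix n n R) (hM : ∀ k, M k k = 0) (hB : ∀ i j, i ≠ j → B i j = -B j i) :
    ∑ k, ∑ c, M k c * B k c = -∑ k, ∑ c, M c k * B k c := by
  rw [eq_neg_iff_add_eq_zero, Finset.sum_comm (f := fun k c => M c k * B k c),
    ← Finset.sum_add_distrib]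
  refine Finset.sum_eq_zero fun k _ => ?_
  rw [← Finset.sum_add_distrib]
  refine Finset.sum_eq_zero fun c _ => ?_
  rcases eq_or_ne k c with rfl | hkc
  · simp [hM]
  · rw [hB k c hkc]
    ring

theorem sum_mul_eq_sum_Pproj_mul {N : ℕ} (L B : Matrix (Fin N) (Fin N) ℝ)
    (hrow : B *ᵥ (fun _ => 1) = 0) (hskew : ∀ i j, i ≠ j → B i j = -B j i) :
    ∑ k, ∑ c, L k c * B k c = ∑ k, ∑ c, Pproj L k c * B k c := by
  have h := sum_mul_eq_neg_sum_transpose_mul (of fun k c => L k c - L k k) B (by simp) hskew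
  rw [sum_mul_eq_sum_sub_diag_mul L B hrow]
  simp only [Pproj, of_apply, div_mul_eq_mul_div, sub_mul, ← Finset.sum_div,
    Finset.sum_sub_distrib] at h ⊢
  linarith

/-- `diagonal Ω * edgeMatrix Ω i j` is `ΩᵢΩⱼ • (Eᵢⱼ - Eⱼᵢ)` plus a diagonal matrix, so
`edgeMatrix Ω i j ∈ 𝓡`. -/
noncomputable def edgeMatrix {n R : Type*} [DecidableEq n] [CommRing R] (Ω : n → R) (i j : n) :
    Matrix n n R :=
  Ω j • (single i j 1 - single i i 1) - Ω i • (single j i 1 - single j j 1)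

theorem edgeMatrix_mulVec_one {n R : Type*} [Fintype n] [DecidableEq n] [CommRing R]
    (Ω : n → R) (i j : n) : edgeMatrix Ω i j *ᵥ (fun _ => 1) = 0 := by
  ext a
  simp [edgeMatrix, sub_mulVec, smul_mulVec, single_mulVec]

theorem edgeMatrix_skew {n R : Type*} [DecidableEq n] [CommRing R] (Ω : n → R) (i j a b : n)
    (hab : a ≠ b) : Ω a * edgeMatrix Ω i j a b = -(Ω b * edgeMatrix Ω i j b a) := by
  simp only [edgeMatrix, sub_apply, smul_apply, single_apply, ite_and, smul_eq_mul]
  split_ifs <;> (try subst_vars) <;> simp_all <;> ring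

theorem trace_transpose_mul_diagonal_mul_edgeMatrix {N : ℕ} (Ω : Fin N → ℝ)
    (L : Matrix (Fin N) (Fin N) ℝ) (i j : Fin N) :
    trace (Lᵀ * diagonal Ω * edgeMatrix Ω i j) = 2 * (Ω i * Ω j) * Pproj L i j := by
  rw [Matrix.mul_assoc, trace_transpose_mul_eq_sum]
  simp [edgeMatrix, diagonal_mul, single_apply, Pproj, mul_sub, Finset.sum_sub_distrib, ite_and]
  ring

end Matrix

/-- Proposition (Bauer et al.): for an `N×N` matrix `L`,
`⟨L,A⟩ = Tr(Lᵀ Ω A) = 0` for all `A ∈ 𝓡` (matrices with zero row sums and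
`Ωᵢᵢ Aᵢⱼ = −Ωⱼⱼ Aⱼᵢ` for `i ≠ j`, i.e. `AᵀΩ + ΩA` diagonal) if and only if
`P(L) = 0`. -/
theorem pairing_vanishes_iff_Pproj_eq_zero (N : ℕ) (Ω : Fin N → ℝ)
    (hΩ : ∀ i, 0 < Ω i) (L : Matrix (Fin N) (Fin N) ℝ) :
    (∀ A : Matrix (Fin N) (Fin N) ℝ,
        A.mulVec (fun _ => 1) = 0 →
        (∀ i j, i ≠ j → Ω i * A i j = -(Ω j * A j i)) →
        Matrix.trace (Lᵀ * Matrix.diagonal Ω * A) = 0)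
      ↔ Pproj L = 0 := by
  constructor
  · intro h
    ext i j
    have h_edge := h (edgeMatrix Ω i j) (edgeMatrix_mulVec_one Ω i j) (edgeMatrix_skew Ω i j)
    rw [trace_transpose_mul_diagonal_mul_edgeMatrix] at h_edge
    have hΩij : 2 * (Ω i * Ω j) ≠ 0 := mul_ne_zero two_ne_zero (mul_pos (hΩ i) (hΩ j)).ne'
    simpa [hΩij] using h_edge
  · intro hP A hrow hskew
    rw [Matrix.mul_assoc, trace_transpose_mul_eq_sum, sum_mul_eq_sum_Pproj_mul L _ ?_ ?_, hP]
    · simp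
    · rw [← mulVec_mulVec, hrow, mulVec_zero]
    · simpa only [diagonal_mul] using hskew
end

section
/- Forward direction of Proposition DM: if P(L) = 0, i.e., (L − L̂)^(A) = 0 where L̂_{ij} = L_{ii}, then Tr(Lᵀ Ω A) = 0 for every A with zero row sums and Ω_{ii}A_{ij} = −Ω_{jj}A_{ji} (i ≠ j). -/
open Matrix

/-- Forward direction of the projector proposition: if `P(L) = 0` then
`Tr(Lᵀ Ω A) = 0` for every `A ∈ 𝓡`, i.e. every `A` with zero row sums and
`Ωᵢᵢ Aᵢⱼ = −Ωⱼⱼ Aⱼᵢ` for `i ≠ j`. -/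
theorem Pproj_zero_implies_pairing_zero (N : ℕ) (Ω : Fin N → ℝ)
    (hΩ : ∀ i, 0 < Ω i) (L : Matrix (Fin N) (Fin N) ℝ)
    (hP : Pproj L = 0) :
    ∀ A : Matrix (Fin N) (Fin N) ℝ,
      A.mulVec (fun _ => 1) = 0 →
      (∀ i j, i ≠ j → Ω i * A i j = -(Ω j * A j i)) →
      Matrix.trace (Lᵀ * Matrix.diagonal Ω * A) = 0 := by
  intro A hrow hskew
  have hL : ∀ i j, L j i - L j j = L i j - L i i := by
    intro i j
    have := congrFun (congrFun hP i) j
    simp only [Pproj, Matrix.of_apply, Matrix.zero_apply] at this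
    linarith
  have hrow' : ∀ j, ∑ i, A j i = 0 := by
    intro j
    have := congrFun hrow j
    simpa [Matrix.mulVec, dotProduct] using this
  have htr : Matrix.trace (Lᵀ * Matrix.diagonal Ω * A) =
      ∑ i, ∑ j, L j i * Ω j * A j i := by
    simp only [Matrix.trace, Matrix.diag_apply, Matrix.mul_apply,
      Matrix.transpose_apply, Matrix.diagonal_apply, mul_ite, mul_zero,
      Finset.sum_ite_eq', Finset.mem_univ, if_true]
  rw [htr]
  set S : ℝ := ∑ i, ∑ j, (L i j - L i i) * (Ω j * A j i) with hS
  have hsplit : (∑ i, ∑ j, L j i * Ω j * A j i) =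
      (∑ i, ∑ j, L j j * Ω j * A j i) + S := by
    rw [hS, ← Finset.sum_add_distrib]
    refine Finset.sum_congr rfl fun i _ => ?_
    rw [← Finset.sum_add_distrib]
    refine Finset.sum_congr rfl fun j _ => ?_
    have h : L j i = L j j + (L i j - L i i) := by linarith [hL i j]
    rw [h]; ring
  have hfirst : (∑ i, ∑ j, L j j * Ω j * A j i) = 0 := by
    rw [Finset.sum_comm]
    refine Finset.sum_eq_zero fun j _ => ?_
    rw [← Finset.mul_sum, hrow' j, mul_zero]
  have hSneg : S = -S := by
    conv_lhs => rw [hS, Finset.sum_comm]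
    rw [hS, ← Finset.sum_neg_distrib, ]
    refine Finset.sum_congr rfl fun i _ => ?_
    rw [← Finset.sum_neg_distrib]
    refine Finset.sum_congr rfl fun j _ => ?_
    by_cases h : i = j
    · subst h; ring
    · have h1 := hskew i j h
      have h2 := hL i j
      -- term: (L j i - L j j) * (Ω i * A i j) = -((L i j - L i i) * (Ω j * A j i))
      rw [h2, h1]; ring
  have hS0 : S = 0 := by linarith
  rw [hsplit, hfirst, hS0, add_zero]
end
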